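/- Let α, β ∈ ℕ and n ≥ 1. Define R_n^{α,β}(x) = r_n^{α,β}(x-1)P_{n-1}^{α+2,β}(x) with r_n^{α,β} = (α+β+2)_n (α+2)_{n-1} / (2·n!·(β+1)_{n-1}). Then the operator L of order 2α+4, defined by Ly(x) = ((x-1)/(x+1)^β) D_x^{α+2}{(x+1)^{α+β+2} D_x^{α+2}[(x-1)^{α+1} y(x)]}, satisfies L R_n^{α,β}(x) = (n)_{α+2}(n+β)_{α+2} R_n^{α,β}(x). -/

import Mathlib

/-!
Both halves of `L` are lowering operators for Jacobi polynomials, read off from the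
hypergeometric series in `(1 - x) / 2` through contiguous relations of its coefficients:
`d/dx [(x-1)^(p+1) P_m^(p+1,b)] = (m+p+1) (x-1)^p P_m^(p,b+1)` and
`d/dx [(x+1)^(q+1) P_m^(a,q+1)] = (m+q+1) (x+1)^q P_m^(a+1,q)`.
With `m = n - 1`, the inner `α + 2` derivatives take `(x-1)^(α+2) P_m^(α+2,β)` to
`(n)_(α+2) P_m^(0,α+β+2)`, and the outer ones take `(x+1)^(α+β+2) P_m^(0,α+β+2)` to
`(n+β)_(α+2) (x+1)^β P_m^(α+2,β)`.
-/

/-- Pochhammer symbol `(a)_k` for real `a`. -/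
noncomputable def poch (a : ℝ) (k : ℕ) : ℝ := (ascPochhammer ℝ k).eval a

/-- The Jacobi polynomial
`P_n^{α,β}(x) = ((α+1)_n / n!) ⬝ ₂F₁(-n, n+α+β+1; α+1; (1-x)/2)`,
written as the terminating hypergeometric sum. -/
noncomputable def jacobiP (n : ℕ) (a b x : ℝ) : ℝ :=
  (poch (a + 1) n / (Nat.factorial n : ℝ)) *
    ∑ k ∈ Finset.range (n + 1),
      (poch (-(n : ℝ)) k * poch ((n : ℝ) + a + b + 1) k) /
        (poch (a + 1) k * (Nat.factorial k : ℝ)) * ((1 - x) / 2) ^ k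

open Finset Nat

lemma poch_succ (a : ℝ) (k : ℕ) : poch a (k + 1) = poch a k * (a + k) :=
  ascPochhammer_succ_eval k a

lemma poch_succ_left (a : ℝ) (k : ℕ) : poch a (k + 1) = a * poch (a + 1) k := by
  simp [poch, ascPochhammer_succ_left]

lemma poch_ne_zero {a : ℝ} (ha : 0 < a) (k : ℕ) : poch a k ≠ 0 :=
  (ascPochhammer_pos k a ha).ne'

lemma poch_neg_natCast_succ (m : ℕ) : poch (-(m : ℝ)) (m + 1) = 0 :=
  ascPochhammer_eval_neg_coe_nat_of_lt (Nat.lt_succ_self m)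

noncomputable def jacobiCoeff (n : ℕ) (a b : ℝ) (k : ℕ) : ℝ :=
  poch (a + 1) n / n ! * (poch (-(n : ℝ)) k * poch (n + a + b + 1) k / (poch (a + 1) k * k !))

lemma jacobiP_eq_sum (n : ℕ) (a b x : ℝ) :
    jacobiP n a b x = ∑ k ∈ range (n + 1), jacobiCoeff n a b k * ((1 - x) / 2) ^ k := by
  rw [jacobiP, mul_sum]
  exact sum_congr rfl fun k _ => by rw [jacobiCoeff]; ring

lemma jacobiCoeff_succ_self (n : ℕ) (a b : ℝ) : jacobiCoeff n a b (n + 1) = 0 := by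
  simp [jacobiCoeff, poch_neg_natCast_succ]

lemma add_mul_jacobiCoeff_add_one_left (m : ℕ) {a : ℝ} (ha : 0 < a + 1) (b : ℝ) (k : ℕ) :
    (a + 1 + k) * jacobiCoeff m (a + 1) b k = (m + a + 1) * jacobiCoeff m a (b + 1) k := by
  have hk := poch_succ_left (a + 1) k
  have hm := poch_succ_left (a + 1) m
  rw [poch_succ] at hk hm
  have h1 := poch_ne_zero ha k
  have h2 := poch_ne_zero (a := a + 1 + 1) (by linarith) k
  simp only [jacobiCoeff]
  rw [show (m : ℝ) + (a + 1) + b + 1 = m + a + (b + 1) + 1 by ring]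
  field_simp
  linear_combination poch (-(m : ℝ)) k * poch (m + a + (b + 1) + 1) k *
    (poch (a + 1 + 1) m * hk - poch (a + 1 + 1) k * hm)

lemma add_mul_jacobiCoeff_sub_succ_mul (m : ℕ) {a : ℝ} (ha : 0 < a + 1) (b : ℝ) (k : ℕ) :
    (b + 1 + k) * jacobiCoeff m a (b + 1) k - (k + 1) * jacobiCoeff m a (b + 1) (k + 1)
      = (m + b + 1) * jacobiCoeff m (a + 1) b k := by
  have hk := poch_succ_left (a + 1) k
  have hm := poch_succ_left (a + 1) m
  rw [poch_succ] at hk hm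
  have h1 := poch_ne_zero ha k
  have h2 := poch_ne_zero (a := a + 1 + 1) (by linarith) k
  have h3 : a + 1 + k ≠ 0 := by positivity
  simp only [jacobiCoeff, poch_succ, factorial_succ]
  rw [show (m : ℝ) + (a + 1) + b + 1 = m + a + (b + 1) + 1 by ring]
  push_cast
  field_simp
  linear_combination (m + b + 1) * poch (-(m : ℝ)) k * poch (m + a + (b + 1) + 1) k *
    (poch (a + 1 + 1) k * hm - poch (a + 1 + 1) m * hk)

lemma hasDerivAt_jacobiP (n : ℕ) (a b x : ℝ) :
    HasDerivAt (jacobiP n a b)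
      (-(1 / 2) * ∑ k ∈ range (n + 1), k * jacobiCoeff n a b k * ((1 - x) / 2) ^ (k - 1)) x := by
  rw [funext (jacobiP_eq_sum n a b), mul_sum]
  exact HasDerivAt.fun_sum fun k _ =>
    (((((hasDerivAt_id' x).const_sub 1).div_const 2).fun_pow k).const_mul _).congr_deriv (by ring)

lemma mul_sum_natCast_mul_pow_pred {R : Type*} [CommSemiring R] (c : ℕ → R) (n : ℕ) (u : R) :
    u * ∑ k ∈ range n, k * c k * u ^ (k - 1) = ∑ k ∈ range n, k * c k * u ^ k := by
  rw [mul_sum]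
  refine sum_congr rfl fun k _ => ?_
  cases k with
  | zero => simp
  | succ k => rw [Nat.add_sub_cancel, pow_succ]; ring

lemma sum_range_natCast_mul_pow_pred {R : Type*} [CommSemiring R] {c : ℕ → R} {n : ℕ}
    (hc : c (n + 1) = 0) (u : R) :
    ∑ k ∈ range (n + 1), k * c k * u ^ (k - 1)
      = ∑ k ∈ range (n + 1), (k + 1) * c (k + 1) * u ^ k := by
  rw [sum_range_succ' _ n, sum_range_succ _ n, hc]
  simp

theorem hasDerivAt_sub_one_pow_mul_jacobiP (m p : ℕ) (b x : ℝ) :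
    HasDerivAt (fun y => (y - 1) ^ (p + 1) * jacobiP m (p + 1) b y)
      ((m + p + 1) * ((x - 1) ^ p * jacobiP m p (b + 1) x)) x := by
  refine ((((hasDerivAt_id' x).sub_const 1).fun_pow (p + 1)).mul
    (hasDerivAt_jacobiP m (p + 1) b x)).congr_deriv ?_
  rw [jacobiP_eq_sum, jacobiP_eq_sum]
  set u := (1 - x) / 2
  set c := jacobiCoeff m (p + 1) b
  have hEuler : (x - 1) * (-(1 / 2) * ∑ k ∈ range (m + 1), k * c k * u ^ (k - 1))
      = ∑ k ∈ range (m + 1), k * c k * u ^ k := by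
    rw [← mul_assoc, show (x - 1) * (-(1 / 2)) = u by ring, mul_sum_natCast_mul_pow_pred]
  have hcoeff : (m + p + 1) * ∑ k ∈ range (m + 1), jacobiCoeff m p (b + 1) k * u ^ k
      = (p + 1) * ∑ k ∈ range (m + 1), c k * u ^ k + ∑ k ∈ range (m + 1), k * c k * u ^ k := by
    rw [mul_sum, mul_sum, ← sum_add_distrib]
    refine sum_congr rfl fun k _ => ?_
    linear_combination (-u ^ k) * add_mul_jacobiCoeff_add_one_left m (a := p) (by positivity) b k
  push_cast
  linear_combination (x - 1) ^ p * (hEuler - hcoeff)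

theorem hasDerivAt_add_one_pow_mul_jacobiP (m q : ℕ) {a : ℝ} (ha : 0 < a + 1) (x : ℝ) :
    HasDerivAt (fun y => (y + 1) ^ (q + 1) * jacobiP m a (q + 1) y)
      ((m + q + 1) * ((x + 1) ^ q * jacobiP m (a + 1) q x)) x := by
  refine ((((hasDerivAt_id' x).add_const 1).fun_pow (q + 1)).mul
    (hasDerivAt_jacobiP m a (q + 1) x)).congr_deriv ?_
  rw [jacobiP_eq_sum, jacobiP_eq_sum]
  set u := (1 - x) / 2
  set c := jacobiCoeff m a (q + 1)
  have hEuler : (x + 1) * (-(1 / 2) * ∑ k ∈ range (m + 1), k * c k * u ^ (k - 1))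
      = ∑ k ∈ range (m + 1), k * c k * u ^ k
        - ∑ k ∈ range (m + 1), (k + 1) * c (k + 1) * u ^ k := by
    rw [← mul_assoc, show (x + 1) * (-(1 / 2)) = u - 1 by ring, sub_mul, one_mul,
      mul_sum_natCast_mul_pow_pred, sum_range_natCast_mul_pow_pred (jacobiCoeff_succ_self _ _ _)]
  have hcoeff : (m + q + 1) * ∑ k ∈ range (m + 1), jacobiCoeff m (a + 1) q k * u ^ k
      = (q + 1) * ∑ k ∈ range (m + 1), c k * u ^ k + (∑ k ∈ range (m + 1), k * c k * u ^ k
        - ∑ k ∈ range (m + 1), (k + 1) * c (k + 1) * u ^ k) := by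
    rw [mul_sum, mul_sum, ← sum_sub_distrib, ← sum_add_distrib]
    refine sum_congr rfl fun k _ => ?_
    linear_combination (-u ^ k) * add_mul_jacobiCoeff_sub_succ_mul m ha q k
  push_cast
  linear_combination (x + 1) ^ q * (hEuler - hcoeff)

lemma iterate_deriv_const_mul {𝕜 : Type*} [NontriviallyNormedField 𝕜] (c : 𝕜) (f : 𝕜 → 𝕜)
    (j : ℕ) : deriv^[j] (fun x => c * f x) = fun x => c * deriv^[j] f x := by
  funext x
  simp only [← iteratedDeriv_eq_iterate, iteratedDeriv_const_mul_field]

theorem iterate_deriv_sub_one_pow_mul_jacobiP (m i j : ℕ) (b : ℝ) :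
    deriv^[j] (fun x => (x - 1) ^ (i + j) * jacobiP m (i + j : ℕ) b x)
      = fun x => poch (m + i + 1) j * ((x - 1) ^ i * jacobiP m i (b + j) x) := by
  induction j generalizing b with
  | zero => simp [poch]
  | succ j ih =>
    have hderiv : deriv (fun x => (x - 1) ^ (i + (j + 1)) * jacobiP m (i + (j + 1) : ℕ) b x)
        = fun x => (m + (i + j : ℕ) + 1) * ((x - 1) ^ (i + j) * jacobiP m (i + j : ℕ) (b + 1) x) :=
      funext fun x => by
        simpa [← add_assoc] using (hasDerivAt_sub_one_pow_mul_jacobiP m (i + j) b x).deriv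
    rw [Function.iterate_succ_apply, hderiv, iterate_deriv_const_mul, ih]
    funext x
    rw [poch_succ, add_right_comm b, Nat.cast_succ, add_assoc b, Nat.cast_add]
    ring

theorem iterate_deriv_add_one_pow_mul_jacobiP (m q j : ℕ) {a : ℝ} (ha : 0 < a + 1) :
    deriv^[j] (fun x => (x + 1) ^ (q + j) * jacobiP m a (q + j : ℕ) x)
      = fun x => poch (m + q + 1) j * ((x + 1) ^ q * jacobiP m (a + j) q x) := by
  induction j generalizing a with
  | zero => simp [poch]
  | succ j ih =>
    have hderiv : deriv (fun x => (x + 1) ^ (q + (j + 1)) * jacobiP m a (q + (j + 1) : ℕ) x)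
        = fun x => (m + (q + j : ℕ) + 1) * ((x + 1) ^ (q + j) * jacobiP m (a + 1) (q + j : ℕ) x) :=
      funext fun x => by
        simpa [← add_assoc] using (hasDerivAt_add_one_pow_mul_jacobiP m (q + j) ha x).deriv
    rw [Function.iterate_succ_apply, hderiv, iterate_deriv_const_mul, ih (by linarith)]
    funext x
    rw [poch_succ, add_right_comm a, Nat.cast_succ, add_assoc a, Nat.cast_add]
    ring

/-- the operator `L` of order `2α+4` has `R_n^{α,β}` as eigenfunction with
eigenvalue `(n)_{α+2}(n+β)_{α+2}`. -/
theorem R_eigen (α β n : ℕ) (hn : 1 ≤ n) :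
    let r : ℝ := poch ((α : ℝ) + (β : ℝ) + 2) n * poch ((α : ℝ) + 2) (n - 1) /
      (2 * (Nat.factorial n : ℝ) * poch ((β : ℝ) + 1) (n - 1))
    let R : ℝ → ℝ := fun x => r * (x - 1) * jacobiP (n - 1) ((α : ℝ) + 2) (β : ℝ) x
    ∀ x ∈ Set.Ioo (-1 : ℝ) 1,
      ((x - 1) / (x + 1) ^ β) *
        deriv^[α + 2] (fun t => (t + 1) ^ (α + β + 2) *
          deriv^[α + 2] (fun s => (s - 1) ^ (α + 1) * R s) t) x
      = poch (n : ℝ) (α + 2) * poch ((n : ℝ) + (β : ℝ)) (α + 2) * R x := by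
  intro r R x hx
  obtain ⟨m, rfl⟩ : ∃ m, n = m + 1 := ⟨n - 1, by omega⟩
  have hinner : (fun s => (s - 1) ^ (α + 1) * R s)
      = fun s => r * ((s - 1) ^ (α + 2) * jacobiP m (α + 2 : ℕ) β s) := by
    funext s
    simp only [R, Nat.add_sub_cancel]
    push_cast
    ring
  have hleft := iterate_deriv_sub_one_pow_mul_jacobiP m 0 (α + 2) β
  have hright := iterate_deriv_add_one_pow_mul_jacobiP m β (α + 2) (a := 0) (by norm_num)
  simp only [zero_add, pow_zero, one_mul, Nat.cast_zero, add_zero] at hleft hright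
  have houter : (fun t => (t + 1) ^ (α + β + 2) *
        deriv^[α + 2] (fun s => (s - 1) ^ (α + 1) * R s) t)
      = fun t => r * poch (m + 1) (α + 2) * ((t + 1) ^ (β + (α + 2)) *
          jacobiP m 0 (β + (α + 2) : ℕ) t) := by
    rw [hinner, iterate_deriv_const_mul, hleft, show α + β + 2 = β + (α + 2) by ring]
    funext t
    push_cast
    ring
  have hxβ : (x + 1) ^ β ≠ 0 := pow_ne_zero _ (by linarith [hx.1])
  rw [houter, iterate_deriv_const_mul, hright]
  simp only [R, Nat.add_sub_cancel]
  push_cast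
  rw [add_right_comm (m : ℝ) 1]
  field_simp
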